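/- arXiv:2404.03847 — 3 statements merged into one kernel-verified Lean document; each statement's English description precedes it below -/
import Mathlib

section
/- For any two finitely-supported random variables x and y, H_min(x) − H_min(x | y) ≤ H(y), where H_min denotes min-entropy, H denotes Shannon entropy, and H_min(x | y) = Σ_y Pr(y=y) · min_x log(1/Pr(x=x | y=y)). -/
open Finset Real

/-- For finitely-supported random variables `x, y` given by a joint distribution `p`,
`H_min(x) − H_min(x | y) ≤ H(y)`.

Here `H_min(x) = min_{x : p_X(x) > 0} log₂(1/p_X(x)) = -log₂(max_x p_X(x))`, the
conditional min-entropy is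
`H_min(x|y) = Σ_y p_Y(y) · min_x log₂(1/Pr(x|y)) = Σ_y p_Y(y) · log₂(p_Y(y)/max_x p(x,y))`,
and `H(y) = Σ_y p_Y(y) · log₂(1/p_Y(y))` is the Shannon entropy. -/
theorem minEntropy_sub_condMinEntropy_le_entropy
    {X Y : Type*} [Fintype X] [Fintype Y] [Nonempty X] [Nonempty Y]
    (p : X → Y → ℝ) (hp : ∀ x y, 0 ≤ p x y)
    (hsum : ∑ x : X, ∑ y : Y, p x y = 1)
    (pX : X → ℝ) (hpX : ∀ x, pX x = ∑ y : Y, p x y)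
    (pY : Y → ℝ) (hpY : ∀ y, pY y = ∑ x : X, p x y)
    (Hmin : ℝ) (hHmin : Hmin = -Real.logb 2 (Finset.univ.sup' Finset.univ_nonempty pX))
    (HminCond : ℝ)
    (hHminCond : HminCond =
      ∑ y : Y, pY y * Real.logb 2 (pY y / Finset.univ.sup' Finset.univ_nonempty (fun x => p x y)))
    (Hy : ℝ) (hHy : Hy = ∑ y : Y, pY y * Real.logb 2 (1 / pY y)) :
    Hmin - HminCond ≤ Hy := by
  subst hHmin hHminCond hHy
  set M := Finset.univ.sup' Finset.univ_nonempty pX with hM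
  have hsumY : ∑ y : Y, pY y = 1 := by
    simp_rw [hpY]; rw [Finset.sum_comm]; exact hsum
  have hMpos : 0 < M := by
    by_contra h
    push_neg at h
    have h2 : ∑ x : X, pX x ≤ 0 :=
      Finset.sum_nonpos fun x _ => le_trans (Finset.le_sup' pX (Finset.mem_univ x)) h
    have h1 : ∑ x : X, pX x = 1 := by simp_rw [hpX]; exact hsum
    linarith
  have hMyle : ∀ y : Y, Finset.univ.sup' Finset.univ_nonempty (fun x => p x y) ≤ M := by
    intro y
    apply Finset.sup'_le
    intro x _
    calc p x y ≤ pX x := by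
          rw [hpX]
          exact Finset.single_le_sum (fun y' _ => hp x y') (Finset.mem_univ y)
      _ ≤ M := Finset.le_sup' pX (Finset.mem_univ x)
  rw [sub_le_iff_le_add, ← Finset.sum_add_distrib]
  have hrw : -Real.logb 2 M = ∑ y : Y, pY y * (-Real.logb 2 M) := by
    rw [← Finset.sum_mul, hsumY, one_mul]
  rw [hrw]
  apply Finset.sum_le_sum
  intro y _
  set My := Finset.univ.sup' Finset.univ_nonempty (fun x => p x y) with hMy
  have hpYnn : 0 ≤ pY y := by
    rw [hpY]; exact Finset.sum_nonneg fun x _ => hp x y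
  rcases eq_or_lt_of_le hpYnn with h0 | hpos
  · rw [← h0]; simp
  · have hMypos : 0 < My := by
      by_contra h
      push_neg at h
      have h2 : ∑ x : X, p x y ≤ 0 :=
        Finset.sum_nonpos fun x _ =>
          le_trans (Finset.le_sup' (fun x => p x y) (Finset.mem_univ x)) h
      rw [hpY] at hpos; linarith
    have hlog : Real.logb 2 (1 / pY y) + Real.logb 2 (pY y / My) = -Real.logb 2 My := by
      rw [Real.logb_div (ne_of_gt hpos) (ne_of_gt hMypos), one_div,
        Real.logb_inv]
      ring
    rw [← mul_add, hlog]
    apply mul_le_mul_of_nonneg_left _ hpYnn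
    exact neg_le_neg (Real.logb_le_logb_of_le one_lt_two hMypos (hMyle y))
end

section
/- Let ε, U be powers of 2 with εU sufficiently large, k = log*(εU), ε_0 = ε/8, ε_i = ε/2^{k−i+4}, U_0 = U, and U_{i+1} = 2⌈⌈log₂(ε_i U_i)+1⌉⌉/ε_i. Define Q_i = ε_i U_i / 16. Then for all i < k: Q_{i+1} ≤ max{log₂ Q_i, 8}. -/
/-!
Write `x = ε_i U_i ≥ 2` and `t = log₂ x`. Since `⌈⌈y⌉⌉ < 2y` and `ε_{i+1} ≤ 2ε_i`, the recursion
gives `ε_{i+1} U_{i+1} ≤ 4⌈⌈t + 1⌉⌉ ≤ 8(t + 1)`, i.e. `Q_{i+1} ≤ (t + 1)/2`, while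
`log₂ Q_i = t - 4`. Finally `(t + 1)/2 ≤ 8` when `t ≤ 15`, and `(t + 1)/2 ≤ t - 4` when `t ≥ 9`.
-/

/-- `⌈⌈x⌉⌉`: the smallest (integer) power of 2 that is at least `x`. -/
noncomputable def cceil (x : ℝ) : ℝ := (2 : ℝ) ^ (⌈Real.logb 2 x⌉ : ℤ)

open Real

lemma cceil_pos (x : ℝ) : 0 < cceil x := by
  unfold cceil; positivity

lemma cceil_le_two_mul {x : ℝ} (hx : 0 < x) : cceil x ≤ 2 * x := by
  have hexp : ((⌈logb 2 x⌉ : ℤ) : ℝ) ≤ logb 2 x + 1 := (Int.ceil_lt_add_one _).le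
  calc cceil x = (2 : ℝ) ^ ((⌈logb 2 x⌉ : ℤ) : ℝ) := (rpow_intCast _ _).symm
    _ ≤ (2 : ℝ) ^ (logb 2 x + 1) := rpow_le_rpow_of_exponent_le (by norm_num) hexp
    _ = 2 * x := by rw [rpow_add two_pos, rpow_logb two_pos (by norm_num) hx, rpow_one, mul_comm]

lemma logb_two_div_sixteen {x : ℝ} (hx : x ≠ 0) : logb 2 (x / 16) = logb 2 x - 4 := by
  have h16 : logb 2 16 = 4 := by
    rw [show (16 : ℝ) = 2 ^ (4 : ℕ) by norm_num, logb_pow, logb_self_eq_one one_lt_two]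
    norm_num
  rw [logb_div hx (by norm_num), h16]

lemma mul_le_of_cceil_recursion {a a' u' x : ℝ} (ha : 0 < a) (hx : 1 ≤ x) (ha' : a' ≤ 2 * a)
    (hu' : u' = 2 * cceil (logb 2 x + 1) / a) : a' * u' ≤ 8 * (logb 2 x + 1) := by
  have hlog : 0 ≤ logb 2 x := logb_nonneg one_lt_two hx
  have hu'_nonneg : 0 ≤ u' := by rw [hu']; have := cceil_pos (logb 2 x + 1); positivity
  calc a' * u' ≤ 2 * a * u' := mul_le_mul_of_nonneg_right ha' hu'_nonneg
    _ = 4 * cceil (logb 2 x + 1) := by rw [hu']; field_simp; ring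
    _ ≤ 8 * (logb 2 x + 1) := by linarith [cceil_le_two_mul (x := logb 2 x + 1) (by linarith)]

lemma half_add_one_le_max_sub_four (t : ℝ) : (t + 1) / 2 ≤ max (t - 4) 8 := by
  rcases le_or_gt t 15 with ht | ht
  · exact le_max_of_le_right (by linarith)
  · exact le_max_of_le_left (by linarith)

/-- With `U_{i+1} = 2⌈⌈log₂(ε_i U_i)+1⌉⌉/ε_i`, `ε_{i+1} ≤ 2 ε_i`, `ε_i U_i ≥ 2`, and
`Q_i = ε_i U_i / 16`, one has `Q_{i+1} ≤ max (log₂ Q_i) 8` for all `i < k`. -/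
theorem Q_recursion (k : ℕ) (ε U Q : ℕ → ℝ)
    (hε : ∀ i, i ≤ k → 0 < ε i)
    (hεU : ∀ i, i ≤ k → 2 ≤ ε i * U i)
    (hεrec : ∀ i, i < k → ε (i + 1) ≤ 2 * ε i)
    (hUrec : ∀ i, i < k → U (i + 1) = 2 * cceil (Real.logb 2 (ε i * U i) + 1) / ε i)
    (hQ : ∀ i, i ≤ k → Q i = ε i * U i / 16) :
    ∀ i, i < k → Q (i + 1) ≤ max (Real.logb 2 (Q i)) 8 := by
  intro i hi
  have hx := hεU i hi.le
  have hstep := mul_le_of_cceil_recursion (hε i hi.le) (by linarith) (hεrec i hi) (hUrec i hi)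
  rw [hQ (i + 1) hi, hQ i hi.le, logb_two_div_sixteen (by positivity)]
  calc ε (i + 1) * U (i + 1) / 16 ≤ (logb 2 (ε i * U i) + 1) / 2 := by linarith
    _ ≤ max (logb 2 (ε i * U i) - 4) 8 := half_add_one_le_max_sub_four _
end

section
/- Let v_1,...,v_ℓ have nonnegative integer weights w_1,...,w_ℓ with each w_j ≤ α and Σ w_j = rα. Define the rounded weights w'_j = α if j ∈ {q_1,...,q_r} and w'_j = 0 otherwise, where q_m is the minimal index with Σ_{j≤q_m} w_j ≥ mα. Then for every prefix index p, |Σ_{j≤p} w'_j − Σ_{j≤p} w_j| ≤ α. -/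
/-!
The rounded prefix sum up to `p` is `α` times the number of quantiles `q_m ≤ p`. By minimality,
`q_m ≤ p` holds exactly when `m α ≤ S_p` (with `S_p` the original prefix sum), so that number is
`⌊S_p / α⌋`, and `α ⌊S_p / α⌋` lies in `(S_p - α, S_p]`. Distinctness of the `q_m`, needed for the
count, holds because a single weight `w_j ≤ α` cannot carry the prefix sum across two multiples
of `α`.
-/

open Finset

theorem Monotone.le_iff_le_of_minimal {ι β : Type*} [LinearOrder ι] [Preorder β] {S : ι → β}
    (hS : Monotone S) {b : β} {k : ι} (hk : b ≤ S k) (hmin : ∀ i < k, S i < b) (p : ι) :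
    k ≤ p ↔ b ≤ S p :=
  ⟨fun h => hk.trans (hS h), fun h => not_lt.1 fun hp => (hmin p hp).not_ge h⟩

theorem Finset.sum_ite_mem_image_const {ι κ M : Type*} [DecidableEq κ] [AddCommMonoid M]
    {q : ι → κ} {t : Finset ι} (hq : Set.InjOn q t) (s : Finset κ) (c : M) :
    ∑ j ∈ s, (if j ∈ t.image q then c else 0) = #{m ∈ t | q m ∈ s} • c := by
  rw [← sum_filter, sum_const, filter_mem_eq_inter, inter_comm, ← filter_mem_eq_inter,
    filter_image, card_image_of_injOn (hq.mono (filter_subset _ _))]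

theorem Nat.card_filter_Icc_mul_le {α r s : ℕ} (hα : 0 < α) (hs : s ≤ r * α) :
    #{m ∈ Icc 1 r | m * α ≤ s} = s / α := by
  have hsr : s / α ≤ r := (Nat.div_le_iff_le_mul_add_pred hα).2 (by nlinarith)
  have hfilter : {m ∈ Icc 1 r | m * α ≤ s} = Icc 1 (s / α) := by
    ext m
    simp only [mem_filter, mem_Icc, ← Nat.le_div_iff_mul_le hα]
    omega
  rw [hfilter, Nat.card_Icc, Nat.add_sub_cancel]

def prefixSum (w : ℕ → ℕ) (n : ℕ) : ℕ := ∑ j ∈ Icc 1 n, w j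

theorem prefixSum_succ (w : ℕ → ℕ) (n : ℕ) : prefixSum w (n + 1) = prefixSum w n + w (n + 1) :=
  sum_Icc_succ_top (Nat.le_add_left 1 n) w

theorem monotone_prefixSum (w : ℕ → ℕ) : Monotone (prefixSum w) := fun _ _ h =>
  sum_le_sum_of_subset (Icc_subset_Icc_right h)

section Quantile

variable {w q : ℕ → ℕ} {α r : ℕ}
  (hq : ∀ m ∈ Icc 1 r, ∀ p, q m ≤ p ↔ m * α ≤ prefixSum w p)
include hq

theorem one_le_quantile (hα : 0 < α) {m : ℕ} (hm : m ∈ Icc 1 r) : 1 ≤ q m := by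
  by_contra h
  have h0 : m * α ≤ 0 := (hq m hm 0).1 (by omega)
  exact (Nat.mul_pos (mem_Icc.1 hm).1 hα).ne' (Nat.le_zero.1 h0)

theorem strictMonoOn_quantile (hα : 0 < α) {ℓ : ℕ} (hw : ∀ j, 1 ≤ j → j ≤ ℓ → w j ≤ α)
    (htot : r * α ≤ prefixSum w ℓ) : StrictMonoOn q (Icc 1 r : Set ℕ) := by
  intro m hm m' hm' hlt
  obtain ⟨i, hi⟩ : ∃ i, q m = i + 1 := ⟨q m - 1, by have := one_le_quantile hq hα hm; omega⟩
  have hiℓ : i + 1 ≤ ℓ :=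
    hi ▸ (hq m hm ℓ).2 ((Nat.mul_le_mul_right α (mem_Icc.1 hm).2).trans htot)
  have hbelow : prefixSum w i < m * α := not_le.1 fun h => by
    have := (hq m hm i).2 h
    omega
  have hstep : w (i + 1) ≤ α := hw _ (by omega) hiℓ
  have hnext : prefixSum w (i + 1) < m' * α := by
    rw [prefixSum_succ]
    nlinarith [Nat.mul_le_mul_right α (Nat.succ_le_of_lt hlt)]
  by_contra! h
  have := (hq m' hm' (i + 1)).1 (hi ▸ h)
  omega

end Quantile

theorem rounding_prefix_error_general
    (ℓ α r : ℕ) (hα : 0 < α)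
    (w : ℕ → ℕ) (hw : ∀ j, 1 ≤ j → j ≤ ℓ → w j ≤ α)
    (htot : ∑ j ∈ Finset.Icc 1 ℓ, w j = r * α)
    (q : ℕ → ℕ)
    (hq : ∀ m, 1 ≤ m → m ≤ r →
      m * α ≤ ∑ j ∈ Finset.Icc 1 (q m), w j ∧
      ∀ q' < q m, ∑ j ∈ Finset.Icc 1 q', w j < m * α)
    (w' : ℕ → ℕ)
    (hw' : ∀ j, (w' j = α ∧ ∃ m, 1 ≤ m ∧ m ≤ r ∧ q m = j) ∨
                (w' j = 0 ∧ ¬ ∃ m, 1 ≤ m ∧ m ≤ r ∧ q m = j)) :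
    ∀ p, p ≤ ℓ →
      |(∑ j ∈ Finset.Icc 1 p, w' j : ℤ) - (∑ j ∈ Finset.Icc 1 p, w j : ℤ)| ≤ (α : ℤ) := by
  intro p hp
  have hiff : ∀ m ∈ Icc 1 r, ∀ p, q m ≤ p ↔ m * α ≤ prefixSum w p := fun m hm =>
    have hm := mem_Icc.1 hm
    (monotone_prefixSum w).le_iff_le_of_minimal (hq m hm.1 hm.2).1 (hq m hm.1 hm.2).2
  have hw'_eq : ∀ j, w' j = if j ∈ (Icc 1 r).image q then α else 0 := fun j => by
    rcases hw' j with ⟨h, hj⟩ | ⟨h, hj⟩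
    · rw [if_pos (by simpa [and_assoc] using hj), h]
    · rw [if_neg (by simpa [and_assoc] using hj), h]
  have hSp : prefixSum w p ≤ r * α := htot ▸ monotone_prefixSum w hp
  have hrounded : ∑ j ∈ Icc 1 p, w' j = prefixSum w p / α * α := by
    rw [sum_congr rfl fun j _ => hw'_eq j,
      sum_ite_mem_image_const (strictMonoOn_quantile hiff hα hw htot.ge).injOn, smul_eq_mul,
      ← Nat.card_filter_Icc_mul_le hα hSp]
    congr 2
    refine filter_congr fun m hm => ?_
    rw [mem_Icc, ← hiff m hm]
    exact and_iff_right (one_le_quantile hiff hα hm)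
  have hlow := Nat.div_mul_le_self (prefixSum w p) α
  have hhigh := Nat.lt_div_mul_add (a := prefixSum w p) hα
  rw [← Nat.cast_sum, ← Nat.cast_sum, hrounded, abs_le]
  unfold prefixSum at *
  omega

/-- Round weights `w_1, …, w_ℓ` (each `≤ α`, summing to `r·α`) to `w'` putting mass `α`
exactly at the quantile positions `q_1, …, q_r` and `0` elsewhere, where `q_m` is the
minimal index with prefix sum `≥ m·α`. Then every prefix sum changes by at most `α`. -/
theorem rounding_prefix_error
    (ℓ α r : ℕ) (hℓ : 1 ≤ ℓ) (hα : 0 < α) (hr : 0 < r)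
    (w : ℕ → ℕ) (hw : ∀ j, 1 ≤ j → j ≤ ℓ → w j ≤ α)
    (htot : ∑ j ∈ Finset.Icc 1 ℓ, w j = r * α)
    (q : ℕ → ℕ)
    (hq : ∀ m, 1 ≤ m → m ≤ r →
      m * α ≤ ∑ j ∈ Finset.Icc 1 (q m), w j ∧
      ∀ q' < q m, ∑ j ∈ Finset.Icc 1 q', w j < m * α)
    (w' : ℕ → ℕ)
    (hw' : ∀ j, (w' j = α ∧ ∃ m, 1 ≤ m ∧ m ≤ r ∧ q m = j) ∨
                (w' j = 0 ∧ ¬ ∃ m, 1 ≤ m ∧ m ≤ r ∧ q m = j)) :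
    ∀ p, p ≤ ℓ →
      |(∑ j ∈ Finset.Icc 1 p, w' j : ℤ) - (∑ j ∈ Finset.Icc 1 p, w j : ℤ)| ≤ (α : ℤ) :=
  rounding_prefix_error_general ℓ α r hα w hw htot q hq w' hw'
end
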